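/- For n ≥ 1, the number of partial permutations of length n with one hole avoiding 1234 equals binomial(2n−2, n−1). Equivalently, s_n^1(1234) = n·C_{n−1} where C_m is the m-th Catalan number. -/

import Mathlib

open Finset

/-- The word `σ` contains the pattern `p`: there is a subsequence of `σ`
order-isomorphic to `p`. -/
def ContainsPat {n ℓ : ℕ} {α β : Type*} [LinearOrder α] [LinearOrder β]
    (σ : Fin n → α) (p : Fin ℓ → β) : Prop :=
  ∃ g : Fin ℓ → Fin n, StrictMono g ∧ ∀ a b : Fin ℓ, σ (g a) < σ (g b) ↔ p a < p b

/-- `σ ∈ S_n` is an extension of the partial permutation `π`: on the non-hole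
positions, the relative order of the values of `σ` matches that of `π`. -/
def IsExtension {n : ℕ} {α : Type*} [LinearOrder α]
    (σ : Equiv.Perm (Fin n)) (π : Fin n → Option α) : Prop :=
  ∀ i j : Fin n, ∀ vi vj : α, π i = some vi → π j = some vj → (σ i < σ j ↔ vi < vj)

/-- The partial permutation `π` avoids the pattern `p`: every extension avoids `p`. -/
def PPAvoids {n ℓ : ℕ} {α β : Type*} [LinearOrder α] [LinearOrder β]
    (π : Fin n → Option α) (p : Fin ℓ → β) : Prop :=
  ∀ σ : Equiv.Perm (Fin n), IsExtension σ π → ¬ ContainsPat (⇑σ) p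

/-- `π` is a partial permutation of length `n` with `k` holes: each value of
`{1,…,n-k}` appears exactly once and there are exactly `k` holes. -/
def IsPPerm {n : ℕ} (k : ℕ) (π : Fin n → Option (Fin (n - k))) : Prop :=
  (Finset.univ.filter fun i => π i = none).card = k ∧
    ∀ v : Fin (n - k), ∃! i : Fin n, π i = some v

/-- `π` is a partial permutation whose holes are exactly at the positions in `H`. -/
def IsPPermH {n : ℕ} (H : Finset (Fin n)) (π : Fin n → Option (Fin (n - H.card))) : Prop :=
  (∀ i, π i = none ↔ i ∈ H) ∧ ∀ v : Fin (n - H.card), ∃! i : Fin n, π i = some v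

/-- `s_n^k(p)`: the number of `p`-avoiding partial permutations of length `n`
with `k` holes. -/
noncomputable def snk (n k : ℕ) {ℓ : ℕ} (p : Fin ℓ → Fin ℓ) : ℕ :=
  Nat.card {π : Fin n → Option (Fin (n - k)) // IsPPerm k π ∧ PPAvoids π p}

/-- `s_n^H(p)`: the number of `p`-avoiding partial permutations of length `n`
with hole set `H`. -/
noncomputable def snH {n ℓ : ℕ} (H : Finset (Fin n)) (p : Fin ℓ → Fin ℓ) : ℕ :=
  Nat.card {π : Fin n → Option (Fin (n - H.card)) // IsPPermH H π ∧ PPAvoids π p}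

/-- The number of permutations of length `m` avoiding the pattern `p`. -/
noncomputable def avoidCount (m : ℕ) {ℓ : ℕ} (p : Fin ℓ → Fin ℓ) : ℕ :=
  Nat.card {σ : Equiv.Perm (Fin m) // ¬ ContainsPat (⇑σ) p}

/-- `p` is a Baxter permutation: no indices `a < b < c = b+1 < d` such that
`(p a, p b, p c, p d)` is order-isomorphic to `2413` or `3142`. -/
def IsBaxter {ℓ : ℕ} (p : Fin ℓ → Fin ℓ) : Prop :=
  ¬ ∃ a b c d : Fin ℓ, a < b ∧ (b : ℕ) + 1 = (c : ℕ) ∧ c < d ∧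
    ((p c < p a ∧ p a < p d ∧ p d < p b) ∨ (p b < p d ∧ p d < p a ∧ p a < p c))

/-!
Fill the hole of a one-hole partial permutation `π` with a value just above the entry preceding
it in an occurrence of `123` among the other letters: that `123` becomes a `1234`. Conversely,
deleting the hole from a `1234` of an extension leaves a `123`. Hence `π` avoids `1234` iff the
permutation `τ` formed by its other letters avoids `123`, and `π ↦ (hole, τ)` gives
`s_n^1(1234) = n · |Av_{n-1}(123)|`.

A `123`-avoiding permutation is determined by its running minimum: the left-to-right minima sit
where it drops, and all other entries are decreasing (Simion–Schmidt). The running minima of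
permutations are exactly the lattice paths below the antidiagonal, which the first-return
decomposition counts by the Catalan recursion. Finally `n · C_{n-1} = C(2n-2, n-1)`.
-/

/-- Dyck paths of semilength `m`, recorded by the heights `f x` of the columns strictly below the
antidiagonal `x + y = m`. -/
def Staircase (m : ℕ) : Type :=
  {f : ℕ → ℕ // (∀ x, m ≤ x → f x = 0) ∧ Antitone f ∧ ∀ x < m, f x + x < m}

namespace Staircase

variable {m : ℕ}

lemma eq_zero (f : Staircase m) {x : ℕ} (hx : m ≤ x) : f.1 x = 0 := f.2.1 x hx

lemma antitone (f : Staircase m) : Antitone f.1 := f.2.2.1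

lemma add_lt (f : Staircase m) {x : ℕ} (hx : x < m) : f.1 x + x < m := f.2.2.2 x hx

lemma lt (f : Staircase m) {x : ℕ} (hx : x < m) : f.1 x < m := by
  have := f.add_lt hx
  omega

lemma apply_le (f : Staircase m) (x : ℕ) : f.1 x ≤ m := by
  by_cases hx : x < m
  · exact (f.lt hx).le
  · simp [f.eq_zero (not_lt.1 hx)]

instance (m : ℕ) : Finite (Staircase m) :=
  .of_injective (fun (f : Staircase m) (x : Fin m) => (⟨f.1 x, f.lt x.2⟩ : Fin m))
    fun f g hfg => Subtype.ext <| funext fun x => by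
      by_cases hx : x < m
      · simpa using congrArg Fin.val (congrFun hfg ⟨x, hx⟩)
      · rw [f.eq_zero (not_lt.1 hx), g.eq_zero (not_lt.1 hx)]

/-- The first-return decomposition, read backwards: `g` is raised by `m - r` and followed by a
column of height `m - r` touching the antidiagonal, then by `h`. -/
def glue (m : ℕ) : (Σ r : Fin (m + 1), Staircase r × Staircase (m - r)) → Staircase (m + 1)
  | ⟨r, g, h⟩ =>
    ⟨fun x => if x < r then g.1 x + (m - r) else if x = r then m - r else h.1 (x - (r + 1)),
      fun x hx => by
        have := h.eq_zero (x := x - (r + 1)) (by omega)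
        dsimp only
        split_ifs <;> omega,
      fun a b hab => by
        have := g.antitone hab
        have := h.antitone (Nat.sub_le_sub_right hab (r + 1))
        have := h.apply_le (a - (r + 1))
        have := h.apply_le (b - (r + 1))
        dsimp only
        split_ifs <;> omega,
      fun x hx => by
        have hr : (r : ℕ) < m + 1 := r.2
        dsimp only
        split_ifs with h₁ h₂
        · have := g.add_lt h₁
          omega
        · omega
        · by_cases hx' : x - (r + 1) < m - r
          · have := h.add_lt hx'
            omega
          · rw [h.eq_zero (not_lt.1 hx')]
            omega⟩

lemma glue_apply (r : Fin (m + 1)) (g : Staircase r) (h : Staircase (m - r)) (x : ℕ) :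
    (glue m ⟨r, g, h⟩).1 x =
      if x < r then g.1 x + (m - r) else if x = r then m - r else h.1 (x - (r + 1)) :=
  rfl

lemma glue_touch (r : Fin (m + 1)) (g : Staircase r) (h : Staircase (m - r)) (x : ℕ) :
    (glue m ⟨r, g, h⟩).1 x + x = m ↔ x = r ∨ (r < x ∧ h.1 (x - (r + 1)) + x = m) := by
  have hr : (r : ℕ) < m + 1 := r.2
  rw [glue_apply]
  split_ifs with h₁ h₂
  · have := g.add_lt h₁
    omega
  · omega
  · omega

lemma glue_injective (m : ℕ) : Function.Injective (glue m) := by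
  rintro ⟨r, g, h⟩ ⟨r', g', h'⟩ heq
  have happ (x : ℕ) := congrArg (fun f : Staircase (m + 1) => f.1 x) heq
  obtain rfl : r = r' := by
    have h₁ := (glue_touch r g h r).2 (.inl rfl)
    have h₂ := (glue_touch r' g' h' r').2 (.inl rfl)
    rw [happ] at h₁
    rw [← happ] at h₂
    have := (glue_touch r' g' h' r).1 h₁
    have := (glue_touch r g h r').1 h₂
    exact Fin.ext (by omega)
  obtain rfl : g = g' := Subtype.ext <| funext fun x => by
    by_cases hx : x < r
    · have := happ x
      simp only [glue_apply, if_pos hx] at this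
      omega
    · rw [g.eq_zero (not_lt.1 hx), g'.eq_zero (not_lt.1 hx)]
  obtain rfl : h = h' := Subtype.ext <| funext fun x => by
    have := happ (r + 1 + x)
    simp only [glue_apply, if_neg (show ¬ r + 1 + x < (r : ℕ) by omega),
      if_neg (show r + 1 + x ≠ (r : ℕ) by omega), Nat.add_sub_cancel_left] at this
    exact this
  rfl

lemma exists_first_touch (f : Staircase (m + 1)) :
    ∃ r ≤ m, f.1 r + r = m ∧ ∀ x < r, f.1 x + x < m := by
  have hm : f.1 m + m = m := by
    have := f.add_lt (Nat.lt_succ_self m)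
    omega
  have htouch : ∃ x, f.1 x + x = m := ⟨m, hm⟩
  have hle := Nat.find_min' htouch hm
  refine ⟨Nat.find htouch, hle, Nat.find_spec htouch, fun x hx => ?_⟩
  have := Nat.find_min htouch hx
  have := f.add_lt (x := x) (by omega)
  omega

lemma glue_surjective (m : ℕ) : Function.Surjective (glue m) := by
  intro f
  obtain ⟨r, hrm, hr, hbelow⟩ := exists_first_touch f
  have hge (x : ℕ) (hx : x ≤ r) : m - r ≤ f.1 x := by
    have := f.antitone hx
    omega
  refine ⟨⟨⟨r, by omega⟩,
    ⟨fun x => if x < r then f.1 x - (m - r) else 0, fun x hx => if_neg (by simpa using hx),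
      fun a b hab => ?_, fun x hx => ?_⟩,
    ⟨fun x => f.1 (r + 1 + x), fun x hx => f.eq_zero (by simp at hx; omega),
      fun a b hab => f.antitone (by omega), fun x hx => ?_⟩⟩, ?_⟩
  · dsimp only
    split_ifs with hb ha
    · exact Nat.sub_le_sub_right (f.antitone hab) _
    · omega
    · omega
    · exact le_rfl
  · simp only at hx ⊢
    rw [if_pos hx]
    have := hbelow x hx
    have := hge x hx.le
    omega
  · simp only at hx ⊢
    have := f.add_lt (x := r + 1 + x) (by omega)
    omega
  · refine Subtype.ext <| funext fun x => (glue_apply _ _ _ x).trans ?_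
    simp only
    split_ifs with h₁ h₂
    · have := hge x h₁.le
      omega
    · subst h₂
      omega
    · rw [show r + 1 + (x - (r + 1)) = x by omega]

theorem card_eq_catalan (m : ℕ) : Nat.card (Staircase m) = catalan m := by
  induction m using Nat.strong_induction_on with
  | _ m ih =>
    match m with
    | 0 =>
      have : Subsingleton (Staircase 0) :=
        ⟨fun f g => Subtype.ext <| funext fun x => by rw [f.eq_zero x.zero_le, g.eq_zero x.zero_le]⟩
      have : Nonempty (Staircase 0) := ⟨⟨fun _ => 0, fun _ _ => rfl, fun _ _ _ => le_rfl,
        fun _ hx => absurd hx (Nat.not_lt_zero _)⟩⟩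
      rw [Nat.card_of_subsingleton (Classical.arbitrary _), catalan_zero]
    | m + 1 =>
      rw [← Nat.card_congr (Equiv.ofBijective _ ⟨glue_injective m, glue_surjective m⟩),
        Nat.card_sigma, catalan_succ]
      refine Finset.sum_congr rfl fun r _ => ?_
      rw [Nat.card_prod, ih r (by omega), ih (m - r) (by omega)]

end Staircase

section Patterns

variable {n : ℕ} {α : Type*} [LinearOrder α]

lemma containsPat_id_iff {ℓ : ℕ} (σ : Fin n → α) :
    ContainsPat σ (id : Fin ℓ → Fin ℓ) ↔ ∃ g : Fin ℓ → Fin n, StrictMono g ∧ StrictMono (σ ∘ g) :=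
  ⟨fun ⟨g, hg, hσg⟩ => ⟨g, hg, fun a b hab => (hσg a b).2 hab⟩,
    fun ⟨g, hg, hσg⟩ => ⟨g, hg, fun _ _ => hσg.lt_iff_lt⟩⟩

lemma containsPat_id_three_iff (σ : Fin n → α) :
    ContainsPat σ (id : Fin 3 → Fin 3) ↔
      ∃ a b c, a < b ∧ b < c ∧ σ a < σ b ∧ σ b < σ c := by
  rw [containsPat_id_iff]
  constructor
  · rintro ⟨g, hg, hσg⟩
    exact ⟨g 0, g 1, g 2, hg (by decide), hg (by decide), hσg (by decide), hσg (by decide)⟩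
  · rintro ⟨a, b, c, hab, hbc, h₁, h₂⟩
    refine ⟨![a, b, c], Fin.strictMono_iff_lt_succ.2 ?_, Fin.strictMono_iff_lt_succ.2 ?_⟩ <;>
      intro i <;> fin_cases i <;> assumption

lemma containsPat_id_four_of {a b c d : Fin n} (hab : a < b) (hbc : b < c) (hcd : c < d)
    (σ : Fin n → α) (h₁ : σ a < σ b) (h₂ : σ b < σ c) (h₃ : σ c < σ d) :
    ContainsPat σ (id : Fin 4 → Fin 4) := by
  refine (containsPat_id_iff σ).2
    ⟨![a, b, c, d], Fin.strictMono_iff_lt_succ.2 ?_, Fin.strictMono_iff_lt_succ.2 ?_⟩ <;>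
    intro i <;> fin_cases i <;> assumption

end Patterns

section Permutations

variable {α : Type*} [LinearOrder α]

lemma Equiv.Perm.eq_of_eqOn_of_strictAntiOn [Fintype α] {σ τ : Equiv.Perm α} {s : Finset α}
    (hs : Set.EqOn σ τ s) (hσ : StrictAntiOn σ ↑sᶜ) (hτ : StrictAntiOn τ ↑sᶜ) : σ = τ := by
  rw [coe_compl] at hσ hτ
  have hrange : Set.range (fun x : ↥(↑s : Set α)ᶜ => σ x) =
      Set.range (fun x : ↥(↑s : Set α)ᶜ => τ x) := by
    simp only [← Set.image_eq_range, Set.image_compl_eq σ.bijective,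
      Set.image_compl_eq τ.bijective, hs.image_eq]
  have hcompl := (StrictAnti.range_inj (fun (x y : ↥(↑s : Set α)ᶜ) hxy => hσ x.2 y.2 hxy)
    (fun (x y : ↥(↑s : Set α)ᶜ) hxy => hτ x.2 y.2 hxy)).1 hrange
  ext x
  by_cases hx : x ∈ s
  · rw [hs hx]
  · exact congrFun hcompl ⟨x, by simpa using hx⟩

lemma Equiv.Perm.exists_eqOn_strictAntiOn [Fintype α] (s : Finset α) {φ : α → α}
    (hφ : Set.InjOn φ s) : ∃ σ : Equiv.Perm α, Set.EqOn σ φ s ∧ StrictAntiOn σ ↑sᶜ := by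
  classical
  have hcard : #(s.image φ)ᶜ = #sᶜ := by rw [card_compl, card_compl, card_image_of_injOn hφ]
  let e := sᶜ.orderIsoOfFin rfl
  let e' := (s.image φ)ᶜ.orderIsoOfFin hcard
  let ψ : α → α := fun x => if hx : x ∈ s then φ x else e' (e.symm ⟨x, mem_compl.2 hx⟩).rev
  have hψs (x : α) (hx : x ∈ s) : ψ x = φ x := dif_pos hx
  have hψ (x : α) (hx : x ∉ s) : ψ x = e' (e.symm ⟨x, mem_compl.2 hx⟩).rev := dif_neg hx
  have hψ_mem (x : α) (hx : x ∉ s) : ψ x ∉ s.image φ := by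
    rw [hψ x hx]
    exact mem_compl.1 (e' _).2
  have hinj : Function.Injective ψ := by
    intro x y hxy
    by_cases hx : x ∈ s <;> by_cases hy : y ∈ s
    · rw [hψs x hx, hψs y hy] at hxy
      exact hφ hx hy hxy
    · have := hψ_mem y hy
      rw [← hxy, hψs x hx] at this
      exact absurd (mem_image_of_mem φ hx) this
    · have := hψ_mem x hx
      rw [hxy, hψs y hy] at this
      exact absurd (mem_image_of_mem φ hy) this
    · rw [hψ x hx, hψ y hy] at hxy
      simpa using e.symm.injective (Fin.rev_injective (e'.injective (Subtype.ext hxy)))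
  refine ⟨Equiv.ofBijective ψ (Finite.injective_iff_bijective.1 hinj),
    fun x hx => dif_pos hx, fun x hx y hy hxy => ?_⟩
  simp only [coe_compl, Set.mem_compl_iff, mem_coe] at hx hy
  change ψ y < ψ x
  rw [hψ x hx, hψ y hy]
  exact e'.strictMono (Fin.rev_lt_rev.2 (e.symm.strictMono hxy))

end Permutations

section LowRecords

variable {m : ℕ}

def lowRecords (f : ℕ → ℕ) : Finset (Fin m) :=
  univ.filter fun x => ∀ y : Fin m, y < x → f x < f y

lemma injOn_lowRecords (f : ℕ → ℕ) :
    Set.InjOn (fun x : Fin m => f x) ((lowRecords f : Finset (Fin m)) : Set (Fin m)) := by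
  intro x hx y hy hxy
  simp only [lowRecords, coe_filter, mem_univ, true_and, Set.mem_ofPred_eq] at hx hy
  by_contra hne
  rcases lt_or_gt_of_ne hne with h | h
  · exact (hy x h).ne' hxy
  · exact (hx y h).ne hxy

lemma exists_mem_lowRecords_le {f : ℕ → ℕ} (hf : Antitone f) (x : Fin m) :
    ∃ y ∈ lowRecords f, y ≤ x ∧ f y = f x := by
  induction x using WellFoundedLT.induction with
  | _ x ih =>
    by_cases hx : x ∈ lowRecords f
    · exact ⟨x, hx, le_rfl, rfl⟩
    · simp only [lowRecords, mem_filter, mem_univ, true_and, not_forall, not_lt] at hx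
      obtain ⟨y, hyx, hfy⟩ := hx
      obtain ⟨z, hz, hzy, hfz⟩ := ih y hyx
      exact ⟨z, hz, hzy.trans hyx.le, hfz.trans (le_antisymm hfy (hf hyx.le))⟩

/-- Otherwise the `m - f x` values `≥ f x` would all sit at the `x` positions before `x`, forcing
`f x + x ≥ m`. -/
lemma Staircase.apply_le_of_strictAntiOn (f : Staircase m) {σ : Equiv.Perm (Fin m)}
    (hrec : ∀ x ∈ lowRecords f.1, (σ x : ℕ) = f.1 x)
    (hanti : StrictAntiOn σ ↑(lowRecords f.1 : Finset (Fin m))ᶜ)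
    (x : Fin m) : f.1 x ≤ σ x := by
  by_contra! hlt
  have hx : x ∉ lowRecords f.1 := fun hx => (hrec x hx).not_lt hlt
  have hsub : univ.filter (fun p => f.1 x ≤ σ p) ⊆ Iio x := by
    intro p hp
    simp only [mem_filter, mem_univ, true_and, mem_Iio] at hp ⊢
    by_contra! hxp
    by_cases hp' : p ∈ lowRecords f.1
    · have hxp' : x < p := lt_of_le_of_ne hxp (by rintro rfl; exact hx hp')
      have := (mem_filter.1 hp').2 x hxp'
      rw [hrec p hp'] at hp
      omega
    · rcases hxp.eq_or_lt with rfl | hxp'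
      · omega
      · have := hanti (by simpa using hx) (by simpa using hp') hxp'
        rw [Fin.lt_def] at this
        omega
  have hcard : #(univ.filter fun p => f.1 x ≤ σ p) = m - f.1 x := by
    rw [card_equiv σ (t := Ici ⟨f.1 x, f.lt x.2⟩) (by simp [Fin.le_def]), Fin.card_Ici]
  have := card_le_card hsub
  rw [hcard, Fin.card_Iio] at this
  have := f.add_lt x.2
  omega

end LowRecords

section RunningMin

variable {m : ℕ} [NeZero m]

noncomputable def runningMin (σ : Fin m → Fin m) (x : ℕ) : ℕ :=
  (univ.filter fun y : Fin m => (y : ℕ) ≤ x).inf' ⟨0, by simp⟩ fun y => (σ y : ℕ)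

lemma runningMin_le (σ : Fin m → Fin m) {x : ℕ} {y : Fin m} (hy : (y : ℕ) ≤ x) :
    runningMin σ x ≤ σ y :=
  inf'_le _ (by simp [hy])

lemma exists_apply_eq_runningMin (σ : Fin m → Fin m) (x : ℕ) :
    ∃ y : Fin m, (y : ℕ) ≤ x ∧ (σ y : ℕ) = runningMin σ x := by
  obtain ⟨y, hy, hv⟩ := exists_mem_eq_inf'
    (⟨0, by simp⟩ : (univ.filter fun y : Fin m => (y : ℕ) ≤ x).Nonempty) fun y => (σ y : ℕ)
  exact ⟨y, by simpa using hy, hv.symm⟩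

lemma runningMin_antitone (σ : Fin m → Fin m) : Antitone (runningMin σ) := by
  intro x y hxy
  obtain ⟨z, hz, hv⟩ := exists_apply_eq_runningMin σ x
  exact hv ▸ runningMin_le σ (hz.trans hxy)

lemma runningMin_eq_zero (σ : Equiv.Perm (Fin m)) {x : ℕ} (hx : m ≤ x) : runningMin σ x = 0 := by
  simpa using runningMin_le σ (y := σ.symm 0) (by omega)

/-- The `x + 1` distinct values `σ 0, …, σ x` all lie in `[runningMin σ x, m)`. -/
lemma runningMin_add_lt (σ : Equiv.Perm (Fin m)) {x : ℕ} (hx : x < m) :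
    runningMin σ x + x < m := by
  obtain ⟨y, hyx, hy⟩ := exists_apply_eq_runningMin σ x
  have hsub : (Iic (⟨x, hx⟩ : Fin m)).image σ ⊆ Ici (σ y) := by
    intro v hv
    obtain ⟨z, hz, rfl⟩ := mem_image.1 hv
    simpa [Fin.le_def, hy] using runningMin_le σ (Fin.le_def.1 (mem_Iic.1 hz))
  have := card_le_card hsub
  rw [card_image_of_injective _ σ.injective, Fin.card_Iic, Fin.card_Ici, Fin.val_mk] at this
  omega

noncomputable def Staircase.ofPerm (σ : Equiv.Perm (Fin m)) : Staircase m :=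
  ⟨runningMin σ, fun _ => runningMin_eq_zero σ, runningMin_antitone σ,
    fun _ => runningMin_add_lt σ⟩

lemma mem_lowRecords_runningMin_iff (σ : Equiv.Perm (Fin m)) (x : Fin m) :
    x ∈ lowRecords (runningMin σ) ↔ (σ x : ℕ) = runningMin σ x := by
  simp only [lowRecords, mem_filter, mem_univ, true_and]
  obtain ⟨z, hzx, hz⟩ := exists_apply_eq_runningMin σ x
  constructor
  · intro h
    rcases hzx.eq_or_lt with hzx | hzx
    · obtain rfl : z = x := Fin.ext hzx
      exact hz
    · have := h z hzx
      have := runningMin_le σ (le_refl (z : ℕ))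
      omega
  · intro h y hyx
    refine (runningMin_antitone σ hyx.le).lt_of_ne fun heq => ?_
    obtain ⟨w, hwy, hw⟩ := exists_apply_eq_runningMin σ y
    have : w = x := σ.injective (Fin.ext (by omega))
    exact absurd (this ▸ hwy) (not_le.2 hyx)

/-- An ascent among the entries that are not left-to-right minima, preceded by a smaller
left-to-right minimum, would be a `123`. -/
lemma strictAntiOn_of_not_containsPat (σ : Equiv.Perm (Fin m))
    (hσ : ¬ ContainsPat σ (id : Fin 3 → Fin 3)) :
    StrictAntiOn σ ↑(lowRecords (runningMin σ) : Finset (Fin m))ᶜ := by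
  intro x hx y hy hxy
  simp only [coe_compl, Set.mem_compl_iff, mem_coe, mem_lowRecords_runningMin_iff] at hx hy
  obtain ⟨z, hzx, hz⟩ := exists_apply_eq_runningMin σ x
  have hzx' : z < x := lt_of_le_of_ne hzx fun h => hx (h ▸ hz)
  have hσz : σ z < σ x := by
    have := runningMin_le σ (le_refl (x : ℕ))
    rw [Fin.lt_def]
    omega
  refine lt_of_le_of_ne (not_lt.1 fun h => hσ ?_) (σ.injective.ne hxy.ne')
  exact (containsPat_id_three_iff σ).2 ⟨z, x, y, hzx', hxy, hσz, h⟩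

lemma eq_of_runningMin_eq {σ τ : Equiv.Perm (Fin m)} (hσ : ¬ ContainsPat σ (id : Fin 3 → Fin 3))
    (hτ : ¬ ContainsPat τ (id : Fin 3 → Fin 3)) (h : runningMin σ = runningMin τ) : σ = τ := by
  refine Equiv.Perm.eq_of_eqOn_of_strictAntiOn (s := lowRecords (runningMin σ))
    (fun x hx => Fin.ext ?_) (strictAntiOn_of_not_containsPat σ hσ) ?_
  · have hxτ := hx
    rw [h] at hxτ
    rw [(mem_lowRecords_runningMin_iff σ x).1 hx, (mem_lowRecords_runningMin_iff τ x).1 hxτ, h]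
  · rw [h]
    exact strictAntiOn_of_not_containsPat τ hτ

/-- Put `f` on its low records and the remaining values, in decreasing order, on the other
positions. -/
lemma exists_runningMin_eq (f : Staircase m) :
    ∃ σ : Equiv.Perm (Fin m), ¬ ContainsPat σ (id : Fin 3 → Fin 3) ∧ runningMin σ = f.1 := by
  obtain ⟨σ, hrec, hanti⟩ := Equiv.Perm.exists_eqOn_strictAntiOn (lowRecords f.1)
    (φ := fun x => ⟨f.1 x, f.lt x.2⟩) fun x hx y hy hxy =>
      injOn_lowRecords f.1 hx hy (congrArg Fin.val hxy)
  have hrec' (x : Fin m) (hx : x ∈ lowRecords f.1) : (σ x : ℕ) = f.1 x :=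
    congrArg Fin.val (hrec hx)
  have hle := f.apply_le_of_strictAntiOn hrec' hanti
  refine ⟨σ, fun hσ => ?_, funext fun x => ?_⟩
  · obtain ⟨a, b, c, hab, hbc, h₁, h₂⟩ := (containsPat_id_three_iff σ).1 hσ
    have hnot {p q : Fin m} (hpq : p < q) (h : σ p < σ q) : q ∉ lowRecords f.1 := fun hq => by
      have := hle p
      have := f.antitone (Fin.le_def.1 hpq.le)
      rw [Fin.lt_def, hrec' q hq] at h
      omega
    exact lt_asymm h₂ (hanti (by simpa using hnot hab h₁) (by simpa using hnot hbc h₂) hbc)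
  · by_cases hx : x < m
    · obtain ⟨y, hy, hyx, hfy⟩ := exists_mem_lowRecords_le f.antitone ⟨x, hx⟩
      obtain ⟨z, hzx, hz⟩ := exists_apply_eq_runningMin σ x
      refine le_antisymm ?_ ?_
      · calc runningMin σ x ≤ σ y := runningMin_le σ hyx
          _ = f.1 x := (hrec' y hy).trans hfy
      · calc f.1 x ≤ f.1 z := f.antitone hzx
          _ ≤ σ z := hle z
          _ = runningMin σ x := hz
    · rw [runningMin_eq_zero σ (not_lt.1 hx), f.eq_zero (not_lt.1 hx)]

end RunningMin

theorem card_perm_avoiding_123 (m : ℕ) :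
    Nat.card {σ : Equiv.Perm (Fin m) // ¬ ContainsPat σ (id : Fin 3 → Fin 3)} = catalan m := by
  rcases m with _ | m
  · have : Nonempty {σ : Equiv.Perm (Fin 0) // ¬ ContainsPat σ (id : Fin 3 → Fin 3)} :=
      ⟨1, fun ⟨g, _⟩ => (g 0).elim0⟩
    rw [Nat.card_of_subsingleton (Classical.arbitrary _), catalan_zero]
  · rw [← Staircase.card_eq_catalan]
    refine Nat.card_congr (Equiv.ofBijective (fun σ => Staircase.ofPerm σ.1) ⟨?_, ?_⟩)
    · exact fun σ τ h => Subtype.ext (eq_of_runningMin_eq σ.2 τ.2 (congrArg Subtype.val h))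
    · intro f
      obtain ⟨σ, hσ, hf⟩ := exists_runningMin_eq f
      exact ⟨⟨σ, hσ⟩, Subtype.ext hf⟩

section Restriction

variable {n : ℕ} {α β : Type*} [LinearOrder α] [LinearOrder β]

lemma containsPat_congr_of_lt_iff {ℓ : ℕ} {σ : Fin n → α} {τ : Fin n → β}
    (h : ∀ i j, σ i < σ j ↔ τ i < τ j) (p : Fin ℓ → Fin ℓ) :
    ContainsPat σ p ↔ ContainsPat τ p :=
  ⟨fun ⟨g, hg, hp⟩ => ⟨g, hg, fun a b => (h _ _).symm.trans (hp a b)⟩,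
    fun ⟨g, hg, hp⟩ => ⟨g, hg, fun a b => (h _ _).trans (hp a b)⟩⟩

/-- Deleting one letter destroys at most one letter of an occurrence of `12⋯(ℓ+1)`. -/
lemma ContainsPat.comp_succAbove {ℓ : ℕ} {σ : Fin (n + 1) → α}
    (hσ : ContainsPat σ (id : Fin (ℓ + 1) → Fin (ℓ + 1))) (h : Fin (n + 1)) :
    ContainsPat (σ ∘ h.succAbove) (id : Fin ℓ → Fin ℓ) := by
  obtain ⟨g, hg, hσg⟩ := (containsPat_id_iff σ).1 hσ
  obtain ⟨e, he, hne⟩ : ∃ e : Fin ℓ → Fin (ℓ + 1), StrictMono e ∧ ∀ s, g (e s) ≠ h := by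
    by_cases hh : ∃ t, g t = h
    · obtain ⟨t, rfl⟩ := hh
      exact ⟨t.succAbove, Fin.strictMono_succAbove t,
        fun s hs => Fin.succAbove_ne t s (hg.injective hs)⟩
    · simp only [not_exists] at hh
      exact ⟨Fin.castSucc, Fin.strictMono_castSucc, fun s => hh _⟩
  choose j hj using fun s => Fin.exists_succAbove_eq (hne s)
  have hj_mono : StrictMono j := fun s t hst => by
    have := hg (he hst)
    rwa [← hj s, ← hj t, Fin.succAbove_lt_succAbove_iff] at this
  refine (containsPat_id_iff _).2 ⟨j, hj_mono, fun s t hst => ?_⟩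
  simpa only [Function.comp_apply, hj] using hσg (he hst)

end Restriction

lemma Fin.val_succAbove {n : ℕ} (p : Fin (n + 1)) (i : Fin n) :
    (p.succAbove i : ℕ) = if (i : ℕ) < p then (i : ℕ) else (i : ℕ) + 1 := by
  rcases lt_or_ge (Fin.castSucc i) p with h | h
  · rw [Fin.succAbove_of_castSucc_lt _ _ h, if_pos (show (i : ℕ) < p from h)]
    rfl
  · rw [Fin.succAbove_of_le_castSucc _ _ h, if_neg (not_lt.2 (show (p : ℕ) ≤ i from h))]
    rfl

section OneHole

variable {m : ℕ}

def insertHole (h : Fin (m + 1)) (τ : Equiv.Perm (Fin m)) : Fin (m + 1) → Option (Fin m) :=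
  fun i => (finSuccEquiv' h i).map τ

@[simp]
lemma insertHole_self (h : Fin (m + 1)) (τ : Equiv.Perm (Fin m)) : insertHole h τ h = none := by
  simp [insertHole, finSuccEquiv'_at]

@[simp]
lemma insertHole_succAbove (h : Fin (m + 1)) (τ : Equiv.Perm (Fin m)) (j : Fin m) :
    insertHole h τ (h.succAbove j) = some (τ j) := by
  simp [insertHole, finSuccEquiv'_succAbove]

lemma insertHole_eq_some {h : Fin (m + 1)} {τ : Equiv.Perm (Fin m)} {i : Fin (m + 1)}
    {v : Fin m} (hi : insertHole h τ i = some v) : i = h.succAbove (τ.symm v) := by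
  rcases eq_or_ne i h with rfl | hih
  · simp at hi
  · obtain ⟨j, rfl⟩ := Fin.exists_succAbove_eq hih
    rw [insertHole_succAbove, Option.some_inj] at hi
    rw [← hi, Equiv.symm_apply_apply]

lemma isPPerm_insertHole (h : Fin (m + 1)) (τ : Equiv.Perm (Fin m)) :
    IsPPerm 1 (insertHole h τ) := by
  refine ⟨card_eq_one.2 ⟨h, ?_⟩, fun v => ⟨h.succAbove (τ.symm v), by simp, fun i hi =>
    insertHole_eq_some hi⟩⟩
  ext i
  rcases eq_or_ne i h with rfl | hih
  · simp
  · obtain ⟨j, rfl⟩ := Fin.exists_succAbove_eq hih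
    simp [Fin.succAbove_ne]

lemma insertHole_inj {h h' : Fin (m + 1)} {τ τ' : Equiv.Perm (Fin m)} :
    insertHole h τ = insertHole h' τ' ↔ h = h' ∧ τ = τ' := by
  refine ⟨fun heq => ?_, fun ⟨hh, hτ⟩ => hh ▸ hτ ▸ rfl⟩
  obtain rfl : h = h' := by
    by_contra hne
    obtain ⟨j, hj⟩ := Fin.exists_succAbove_eq hne
    have := congrFun heq h
    rw [insertHole_self, ← hj, insertHole_succAbove] at this
    exact Option.some_ne_none _ this.symm
  exact ⟨rfl, Equiv.ext fun j => by simpa using congrFun heq (h.succAbove j)⟩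

lemma exists_insertHole_eq {π : Fin (m + 1) → Option (Fin m)} (hπ : IsPPerm 1 π) :
    ∃ h τ, insertHole h τ = π := by
  obtain ⟨h, hh⟩ := card_eq_one.1 hπ.1
  have hnone (i : Fin (m + 1)) : π i = none ↔ i = h := by
    simpa using congrArg (i ∈ ·) hh
  choose f hf using fun v => (hπ.2 v).exists
  choose ρ hρ using fun v => Fin.exists_succAbove_eq fun hv : f v = h =>
    Option.some_ne_none v ((hf v).symm.trans ((hnone _).2 hv))
  have hρ_inj : Function.Injective ρ := fun v w hvw => by
    have := congrArg π (show f v = f w by rw [← hρ v, ← hρ w, hvw])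
    rwa [hf, hf, Option.some_inj] at this
  let τ := (Equiv.ofBijective ρ (Finite.injective_iff_bijective.1 hρ_inj)).symm
  refine ⟨h, τ, funext fun i => ?_⟩
  rcases eq_or_ne i h with rfl | hih
  · rw [insertHole_self, (hnone i).2 rfl]
  · obtain ⟨j, rfl⟩ := Fin.exists_succAbove_eq hih
    rw [insertHole_succAbove, ← hf (τ j), ← hρ]
    congr 2
    exact (Equiv.ofBijective ρ _).apply_symm_apply j

def fillHole (h w : Fin (m + 1)) (τ : Equiv.Perm (Fin m)) : Equiv.Perm (Fin (m + 1)) :=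
  (finSuccEquiv' h).trans ((Equiv.optionCongr τ).trans (finSuccEquiv' w).symm)

@[simp]
lemma fillHole_self (h w : Fin (m + 1)) (τ : Equiv.Perm (Fin m)) : fillHole h w τ h = w := by
  simp [fillHole, finSuccEquiv'_at, finSuccEquiv'_symm_none]

@[simp]
lemma fillHole_succAbove (h w : Fin (m + 1)) (τ : Equiv.Perm (Fin m)) (j : Fin m) :
    fillHole h w τ (h.succAbove j) = w.succAbove (τ j) := by
  simp [fillHole, finSuccEquiv'_succAbove, finSuccEquiv'_symm_some]

lemma isExtension_fillHole (h w : Fin (m + 1)) (τ : Equiv.Perm (Fin m)) :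
    IsExtension (fillHole h w τ) (insertHole h τ) := by
  intro i j vi vj hi hj
  rw [insertHole_eq_some hi, insertHole_eq_some hj, fillHole_succAbove, fillHole_succAbove,
    Fin.succAbove_lt_succAbove_iff, Equiv.apply_symm_apply, Equiv.apply_symm_apply]

lemma isExtension_insertHole_iff {σ : Equiv.Perm (Fin (m + 1))} {h : Fin (m + 1)}
    {τ : Equiv.Perm (Fin m)} :
    IsExtension σ (insertHole h τ) ↔ ∀ i j, σ (h.succAbove i) < σ (h.succAbove j) ↔ τ i < τ j := by
  refine ⟨fun hσ i j => hσ _ _ _ _ (insertHole_succAbove h τ i) (insertHole_succAbove h τ j),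
    fun hσ i j vi vj hi hj => ?_⟩
  rw [insertHole_eq_some hi, insertHole_eq_some hj, hσ, Equiv.apply_symm_apply,
    Equiv.apply_symm_apply]

/-- A `123` of `τ` becomes a `1234` once the hole gets a value just above the entry of the
`123` preceding it (or `0` if there is none). -/
lemma not_ppAvoids_insertHole {τ : Equiv.Perm (Fin m)}
    (hτ : ContainsPat τ (id : Fin 3 → Fin 3)) (h : Fin (m + 1)) :
    ¬ PPAvoids (insertHole h τ) (id : Fin 4 → Fin 4) := by
  obtain ⟨a, b, c, hab, hbc, h₁, h₂⟩ := (containsPat_id_three_iff τ).1 hτ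
  have hab' := Fin.strictMono_succAbove h hab
  have hbc' := Fin.strictMono_succAbove h hbc
  rw [Fin.lt_def] at h₁ h₂
  have hc := (τ c).2
  suffices ∃ w, ContainsPat (fillHole h w τ) (id : Fin 4 → Fin 4) by
    obtain ⟨w, hw⟩ := this
    exact fun hπ => hπ _ (isExtension_fillHole h w τ) hw
  rcases lt_or_gt_of_ne (h.succAbove_ne a).symm with ha | ha
  · refine ⟨0, containsPat_id_four_of ha hab' hbc' _ ?_ ?_ ?_⟩ <;>
      simp only [Fin.lt_def, fillHole_self, fillHole_succAbove, Fin.val_succAbove, Fin.val_zero,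
        Nat.not_lt_zero, ↓reduceIte] <;> omega
  rcases lt_or_gt_of_ne (h.succAbove_ne b).symm with hb | hb
  · refine ⟨(τ a).succ, containsPat_id_four_of ha hb hbc' _ ?_ ?_ ?_⟩ <;>
      simp only [Fin.lt_def, fillHole_self, fillHole_succAbove, Fin.val_succAbove, Fin.val_succ] <;>
      split_ifs <;> omega
  rcases lt_or_gt_of_ne (h.succAbove_ne c).symm with hc' | hc'
  · refine ⟨(τ b).succ, containsPat_id_four_of hab' hb hc' _ ?_ ?_ ?_⟩ <;>
      simp only [Fin.lt_def, fillHole_self, fillHole_succAbove, Fin.val_succAbove, Fin.val_succ] <;>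
      split_ifs <;> omega
  · refine ⟨Fin.last m, containsPat_id_four_of hab' hbc' hc' _ ?_ ?_ ?_⟩ <;>
      simp only [Fin.lt_def, fillHole_self, fillHole_succAbove, Fin.val_succAbove, Fin.val_last] <;>
      split_ifs <;> omega

lemma ppAvoids_insertHole_iff (h : Fin (m + 1)) (τ : Equiv.Perm (Fin m)) :
    PPAvoids (insertHole h τ) (id : Fin 4 → Fin 4) ↔ ¬ ContainsPat τ (id : Fin 3 → Fin 3) := by
  refine ⟨fun hπ hτ => not_ppAvoids_insertHole hτ h hπ, fun hτ σ hσ hσ4 => hτ ?_⟩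
  exact (containsPat_congr_of_lt_iff (isExtension_insertHole_iff.1 hσ) _).1 (hσ4.comp_succAbove h)

theorem card_oneHole_avoiding_1234 (m : ℕ) :
    Nat.card {π : Fin (m + 1) → Option (Fin m) // IsPPerm 1 π ∧ PPAvoids π (id : Fin 4 → Fin 4)}
      = (m + 1) * catalan m := by
  let e : Fin (m + 1) × {τ : Equiv.Perm (Fin m) // ¬ ContainsPat τ (id : Fin 3 → Fin 3)} ≃
      {π : Fin (m + 1) → Option (Fin m) // IsPPerm 1 π ∧ PPAvoids π (id : Fin 4 → Fin 4)} :=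
    Equiv.ofBijective (fun p => ⟨insertHole p.1 p.2, isPPerm_insertHole p.1 p.2,
      (ppAvoids_insertHole_iff p.1 p.2).2 p.2.2⟩)
      ⟨fun p q hpq => ?_, fun π => ?_⟩
  · rw [← Nat.card_congr e, Nat.card_prod, Nat.card_eq_fintype_card, Fintype.card_fin,
      card_perm_avoiding_123]
  · obtain ⟨hh, hτ⟩ := insertHole_inj.1 (congrArg Subtype.val hpq)
    exact Prod.ext hh (Subtype.ext hτ)
  · obtain ⟨h, τ, hπ⟩ := exists_insertHole_eq π.2.1
    exact ⟨(h, ⟨τ, (ppAvoids_insertHole_iff h τ).1 (hπ ▸ π.2.2)⟩), Subtype.ext hπ⟩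

end OneHole

/-- `s_n^1(1234) = C(2n-2, n-1) = n · Catalan(n-1)` for `n ≥ 1`. -/
theorem count_1234_one_hole (n : ℕ) (hn : 1 ≤ n) :
    snk n 1 (id : Fin 4 → Fin 4) = (2 * n - 2).choose (n - 1) ∧
    snk n 1 (id : Fin 4 → Fin 4) = n * catalan (n - 1) := by
  obtain ⟨m, rfl⟩ : ∃ m, n = m + 1 := ⟨n - 1, by omega⟩
  have hcount : snk (m + 1) 1 (id : Fin 4 → Fin 4) = (m + 1) * catalan m :=
    card_oneHole_avoiding_1234 m
  refine ⟨?_, by simpa using hcount⟩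
  rw [hcount, succ_mul_catalan_eq_centralBinom, Nat.centralBinom,
    show 2 * (m + 1) - 2 = 2 * m by omega, Nat.add_sub_cancel]
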